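/- Let B₁, B₂ ⊆ S^{n-1} (n ≥ 2) be nonempty closed disjoint sets such that ℙ·B₁ and ℙ·B₂ are convex. Then the set E := {u ∈ S^{n-1} : ⟨b₁,u⟩ > 0 ∀ b₁ ∈ B₁, ⟨b₂,u⟩ < 0 ∀ b₂ ∈ B₂} is nonempty, open in S^{n-1}, and spherically convex (ℙ·E is convex). -/

import Mathlib

open Pointwise

/-! The set `E` is the unit-sphere slice of the strict dual cone `D = {u | ∀ x ∈ K, 0 < ⟪x, u⟫}`
of the compact set `K = B₁ ∪ -B₂`, so it suffices that `D` is a nonempty open convex cone.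
Openness comes from the compactness of `K`, convexity is clear, and nonemptiness follows from
Hahn–Banach once `0 ∉ conv K` (the hull is compact by Carathéodory). A convex combination
`s a - t c = 0` with `a ∈ conv B₁ ⊆ ℙ·B₁` and `c ∈ conv B₂ ⊆ ℙ·B₂` would put `s a = t c` in both
cones, which are disjoint because `B₁` and `B₂` are disjoint subsets of the unit sphere. -/

section

open Set Module

variable {E : Type*} [AddCommGroup E] [Module ℝ E]

-- By Carathéodory, a point of the hull is a convex combination of at most `finrank ℝ E + 1`
-- points of `s`.
theorem convexHull_eq_iUnion_image_stdSimplex [FiniteDimensional ℝ E] (s : Set E) :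
    convexHull ℝ s = ⋃ k : Fin (finrank ℝ E + 2),
      (fun p : (Fin k → ℝ) × (Fin k → E) => ∑ i, p.1 i • p.2 i) ''
        (stdSimplex ℝ (Fin k) ×ˢ univ.pi fun _ => s) := by
  apply Subset.antisymm
  · intro x hx
    obtain ⟨ι, _, z, w, hzs, hz, hw₀, hw₁, rfl⟩ := eq_pos_convex_span_of_mem_convexHull hx
    have hcard : Fintype.card ι < finrank ℝ E + 2 := by
      have := hz.card_le_finrank_succ
      have := Submodule.finrank_le (vectorSpan ℝ (range z))
      omega
    let e := (Fintype.equivFin ι).symm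
    refine mem_iUnion.2 ⟨⟨_, hcard⟩, (w ∘ e, z ∘ e),
      ⟨⟨fun i => (hw₀ _).le, ?_⟩, fun i _ => hzs (mem_range_self _)⟩, ?_⟩
    · simpa [hw₁] using e.sum_comp w
    · exact e.sum_comp fun i => w i • z i
  · refine iUnion_subset fun k => ?_
    rintro _ ⟨⟨w, z⟩, ⟨⟨hw₀, hw₁⟩, hz⟩, rfl⟩
    exact (convex_convexHull ℝ s).sum_mem (fun i _ => hw₀ i) hw₁
      fun i _ => subset_convexHull ℝ s (hz i trivial)

theorem IsCompact.convexHull [FiniteDimensional ℝ E] [TopologicalSpace E] [ContinuousAdd E]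
    [ContinuousSMul ℝ E] {s : Set E} (hs : IsCompact s) : IsCompact (convexHull ℝ s) := by
  rw [convexHull_eq_iUnion_image_stdSimplex]
  exact isCompact_iUnion fun k =>
    ((isCompact_stdSimplex ℝ _).prod (isCompact_univ_pi fun _ => hs)).image (by fun_prop)

lemma setOf_exists_pos_smul_eq (B : Set E) :
    {y | ∃ t > (0 : ℝ), ∃ b ∈ B, y = t • b} = Ioi (0 : ℝ) • B := by
  ext y
  simp [mem_smul, eq_comm]

lemma smul_mem_Ioi_smul {B : Set E} {t : ℝ} (ht : 0 < t) {y : E} (hy : y ∈ Ioi (0 : ℝ) • B) :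
    t • y ∈ Ioi (0 : ℝ) • B := by
  obtain ⟨s, hs, b, hb, rfl⟩ := hy
  exact ⟨t * s, mul_pos ht hs, b, hb, (smul_smul t s b).symm⟩

lemma zero_notMem_convexHull_union_neg {B₁ B₂ : Set E} (hne₁ : B₁.Nonempty) (hne₂ : B₂.Nonempty)
    (hc₁ : Convex ℝ (Ioi (0 : ℝ) • B₁)) (hc₂ : Convex ℝ (Ioi (0 : ℝ) • B₂))
    (h₁ : (0 : E) ∉ B₁) (h₂ : (0 : E) ∉ B₂)
    (hdisj : Disjoint (Ioi (0 : ℝ) • B₁) (Ioi (0 : ℝ) • B₂)) :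
    (0 : E) ∉ convexHull ℝ (B₁ ∪ -B₂) := by
  have hsub : ∀ B : Set E, Convex ℝ (Ioi (0 : ℝ) • B) → convexHull ℝ B ⊆ Ioi (0 : ℝ) • B :=
    fun B hc => convexHull_min (fun b hb => ⟨1, mem_Ioi.2 one_pos, b, hb, one_smul ℝ b⟩) hc
  have hzero : ∀ B : Set E, (0 : E) ∉ B → (0 : E) ∉ Ioi (0 : ℝ) • B := by
    intro B hB h
    simp [zero_mem_smul_iff, hB] at h
  rw [convexHull_union hne₁ hne₂.neg, convexHull_neg, mem_convexJoin]
  rintro ⟨a, ha, c, hc, s, t, hs, ht, hst, hsum⟩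
  replace ha := hsub B₁ hc₁ ha
  replace hc : -c ∈ Ioi (0 : ℝ) • B₂ := hsub B₂ hc₂ hc
  rcases hs.eq_or_lt with rfl | hs
  · obtain rfl : t = 1 := by linarith
    simp only [zero_smul, one_smul, zero_add] at hsum
    exact hzero B₂ h₂ (by simpa [hsum] using hc)
  rcases ht.eq_or_lt with rfl | ht
  · obtain rfl : s = 1 := by linarith
    simp only [zero_smul, one_smul, add_zero] at hsum
    exact hzero B₁ h₁ (hsum ▸ ha)
  have heq : s • a = t • -c := by rw [smul_neg, eq_neg_iff_add_eq_zero, hsum]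
  exact hdisj.ne_of_mem (smul_mem_Ioi_smul hs ha) (smul_mem_Ioi_smul ht hc) heq

end

section

open Set Metric

variable {E : Type*} [NormedAddCommGroup E] [NormedSpace ℝ E]

lemma disjoint_Ioi_smul_of_subset_sphere {B₁ B₂ : Set E} (h₁ : B₁ ⊆ sphere 0 1)
    (h₂ : B₂ ⊆ sphere 0 1) (h : Disjoint B₁ B₂) :
    Disjoint (Ioi (0 : ℝ) • B₁) (Ioi (0 : ℝ) • B₂) := by
  rw [Set.disjoint_left]
  rintro _ ⟨t, ht : 0 < t, b, hb, rfl⟩ ⟨s, hs : 0 < s, c, hc, hsc⟩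
  have hb₁ : ‖b‖ = 1 := by simpa using h₁ hb
  have hc₁ : ‖c‖ = 1 := by simpa using h₂ hc
  obtain rfl : s = t := by
    simpa [norm_smul, abs_of_pos ht, abs_of_pos hs, hb₁, hc₁] using congrArg norm hsc
  exact h.ne_of_mem hb hc (smul_right_injective E (ne_of_gt hs) hsc).symm

lemma Ioi_smul_inter_sphere_eq {D : Set E} (h0 : (0 : E) ∉ D)
    (hD : ∀ t : ℝ, 0 < t → ∀ u ∈ D, t • u ∈ D) :
    Ioi (0 : ℝ) • (D ∩ sphere 0 1) = D := by
  refine Subset.antisymm ?_ fun u hu => ?_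
  · rintro _ ⟨t, ht, u, ⟨hu, -⟩, rfl⟩
    exact hD t ht u hu
  have hu0 : u ≠ 0 := ne_of_mem_of_not_mem hu h0
  refine ⟨‖u‖, norm_pos_iff.2 hu0, ‖u‖⁻¹ • u,
    ⟨hD _ (inv_pos.2 (norm_pos_iff.2 hu0)) u hu, by
      rw [mem_sphere_zero_iff_norm, norm_smul, norm_inv, norm_norm,
        inv_mul_cancel₀ (norm_ne_zero_iff.2 hu0)]⟩, ?_⟩
  simp [smul_smul, mul_inv_cancel₀ (norm_ne_zero_iff.2 hu0)]

end

section

open Set InnerProductSpace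
open scoped RealInnerProductSpace

variable {E : Type*} [NormedAddCommGroup E] [InnerProductSpace ℝ E]

def strictInnerDualCone (K : Set E) : Set E :=
  {u | ∀ x ∈ K, 0 < ⟪x, u⟫}

variable {K : Set E}

lemma convex_strictInnerDualCone : Convex ℝ (strictInnerDualCone K) := by
  intro u hu v hv a b ha hb hab x hx
  simpa [inner_add_right, real_inner_smul_right] using
    convex_Ioi (0 : ℝ) (hu x hx) (hv x hx) ha hb hab

lemma smul_mem_strictInnerDualCone {t : ℝ} (ht : 0 < t) {u : E}
    (hu : u ∈ strictInnerDualCone K) : t • u ∈ strictInnerDualCone K := fun x hx => by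
  rw [real_inner_smul_right]
  exact mul_pos ht (hu x hx)

lemma zero_notMem_strictInnerDualCone (hK : K.Nonempty) : (0 : E) ∉ strictInnerDualCone K :=
  fun h => by simpa using h _ hK.some_mem

lemma mem_strictInnerDualCone_union_neg {B₁ B₂ : Set E} {u : E} :
    u ∈ strictInnerDualCone (B₁ ∪ -B₂) ↔ (∀ b ∈ B₁, 0 < ⟪b, u⟫) ∧ ∀ b ∈ B₂, ⟪b, u⟫ < 0 := by
  simp [strictInnerDualCone, or_imp, forall_and, inner_neg_left]

lemma IsCompact.isOpen_strictInnerDualCone (hK : IsCompact K) :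
    IsOpen (strictInnerDualCone K) := by
  refine isOpen_iff_eventually.2 fun u hu => hK.eventually_forall_of_forall_eventually fun x hx => ?_
  exact (isOpen_lt continuous_const (continuous_snd.inner continuous_fst)).mem_nhds (hu x hx)

lemma strictInnerDualCone_nonempty [FiniteDimensional ℝ E] (hK : IsCompact K)
    (h0 : (0 : E) ∉ convexHull ℝ K) : (strictInnerDualCone K).Nonempty := by
  obtain ⟨f, r, hf0, hfK⟩ :=
    geometric_hahn_banach_point_closed (convex_convexHull ℝ K) hK.convexHull.isClosed h0
  refine ⟨(toDual ℝ E).symm f, fun x hx => ?_⟩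
  rw [real_inner_comm, toDual_symm_apply]
  exact (map_zero f ▸ hf0).trans (hfK x (subset_convexHull ℝ K hx))

end

theorem stmt_17_general {n : ℕ} (B₁ B₂ : Set (EuclideanSpace ℝ (Fin n)))
    (hB₁ : B₁ ⊆ Metric.sphere (0 : EuclideanSpace ℝ (Fin n)) 1)
    (hB₂ : B₂ ⊆ Metric.sphere (0 : EuclideanSpace ℝ (Fin n)) 1)
    (hne₁ : B₁.Nonempty) (hne₂ : B₂.Nonempty)
    (hcl₁ : IsClosed B₁) (hcl₂ : IsClosed B₂)
    (hc₁ : Convex ℝ {y : EuclideanSpace ℝ (Fin n) | ∃ t > (0 : ℝ), ∃ b ∈ B₁, y = t • b})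
    (hc₂ : Convex ℝ {y : EuclideanSpace ℝ (Fin n) | ∃ t > (0 : ℝ), ∃ b ∈ B₂, y = t • b})
    (hdisj : B₁ ∩ B₂ = ∅)
    (E : Set (EuclideanSpace ℝ (Fin n)))
    (hE : E = {u ∈ Metric.sphere (0 : EuclideanSpace ℝ (Fin n)) 1 |
        (∀ b ∈ B₁, (inner ℝ b u : ℝ) > 0) ∧ (∀ b ∈ B₂, (inner ℝ b u : ℝ) < 0)}) :
    E.Nonempty ∧
    (∃ V : Set (EuclideanSpace ℝ (Fin n)), IsOpen V ∧
      E = V ∩ Metric.sphere (0 : EuclideanSpace ℝ (Fin n)) 1) ∧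
    Convex ℝ {y : EuclideanSpace ℝ (Fin n) | ∃ t > (0 : ℝ), ∃ u ∈ E, y = t • u} := by
  have hK₁ : IsCompact B₁ := (isCompact_sphere 0 1).of_isClosed_subset hcl₁ hB₁
  have hK₂ : IsCompact B₂ := (isCompact_sphere 0 1).of_isClosed_subset hcl₂ hB₂
  have hK : IsCompact (B₁ ∪ -B₂) := hK₁.union hK₂.neg
  have h0 : ∀ {B : Set (EuclideanSpace ℝ (Fin n))}, B ⊆ Metric.sphere 0 1 → 0 ∉ B :=
    fun hB h => by simpa using hB h
  set D := strictInnerDualCone (B₁ ∪ -B₂)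
  have hED : E = D ∩ Metric.sphere 0 1 := by
    ext u
    rw [hE, Set.mem_inter_iff, mem_strictInnerDualCone_union_neg]
    exact and_comm
  have hD : D.Nonempty := strictInnerDualCone_nonempty hK <|
    zero_notMem_convexHull_union_neg hne₁ hne₂ (setOf_exists_pos_smul_eq B₁ ▸ hc₁)
      (setOf_exists_pos_smul_eq B₂ ▸ hc₂) (h0 hB₁) (h0 hB₂)
      (disjoint_Ioi_smul_of_subset_sphere hB₁ hB₂ (Set.disjoint_iff_inter_eq_empty.2 hdisj))
  have hcone : Set.Ioi (0 : ℝ) • E = D := hED ▸ Ioi_smul_inter_sphere_eq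
    (zero_notMem_strictInnerDualCone (hne₁.mono Set.subset_union_left))
    fun _ ht _ hu => smul_mem_strictInnerDualCone ht hu
  rw [setOf_exists_pos_smul_eq, hcone]
  exact ⟨(hcone ▸ hD).of_smul_right, ⟨D, hK.isOpen_strictInnerDualCone, hED⟩,
    convex_strictInnerDualCone⟩

theorem stmt_17 {n : ℕ} (hn : 2 ≤ n) (B₁ B₂ : Set (EuclideanSpace ℝ (Fin n)))
    (hB₁ : B₁ ⊆ Metric.sphere (0 : EuclideanSpace ℝ (Fin n)) 1)
    (hB₂ : B₂ ⊆ Metric.sphere (0 : EuclideanSpace ℝ (Fin n)) 1)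
    (hne₁ : B₁.Nonempty) (hne₂ : B₂.Nonempty)
    (hcl₁ : IsClosed B₁) (hcl₂ : IsClosed B₂)
    (hc₁ : Convex ℝ {y : EuclideanSpace ℝ (Fin n) | ∃ t > (0 : ℝ), ∃ b ∈ B₁, y = t • b})
    (hc₂ : Convex ℝ {y : EuclideanSpace ℝ (Fin n) | ∃ t > (0 : ℝ), ∃ b ∈ B₂, y = t • b})
    (hdisj : B₁ ∩ B₂ = ∅)
    (E : Set (EuclideanSpace ℝ (Fin n)))
    (hE : E = {u ∈ Metric.sphere (0 : EuclideanSpace ℝ (Fin n)) 1 |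
        (∀ b ∈ B₁, (inner ℝ b u : ℝ) > 0) ∧ (∀ b ∈ B₂, (inner ℝ b u : ℝ) < 0)}) :
    E.Nonempty ∧
    (∃ V : Set (EuclideanSpace ℝ (Fin n)), IsOpen V ∧
      E = V ∩ Metric.sphere (0 : EuclideanSpace ℝ (Fin n)) 1) ∧
    Convex ℝ {y : EuclideanSpace ℝ (Fin n) | ∃ t > (0 : ℝ), ∃ u ∈ E, y = t • u} :=
  stmt_17_general B₁ B₂ hB₁ hB₂ hne₁ hne₂ hcl₁ hcl₂ hc₁ hc₂ hdisj E hE
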